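/- Fix an integer B ≥ 1 and let f(x) = x^{B/2−1} e^{−x/2} / (2^{B/2} Γ(B/2)). For τ > 0 define D(τ) = [−(B + τ²) ∫_{τ²}^∞ (τ − √x) f(x) dx + τ ∫_{τ²}^∞ (√x − τ)² f(x) dx] / [Bτ − B ∫_{τ²}^∞ (τ − √x) f(x) dx]. Then D(τ) ∼ τ^{B−2} e^{−τ²/2} / (2^{B/2−1} B Γ(B/2)) as τ → ∞, i.e., lim_{τ→∞} D(τ) · 2^{B/2−1} B Γ(B/2) · e^{τ²/2} τ^{2−B} = 1. -/

import Mathlib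

open MeasureTheory Real Set Filter

/-- The chi-square density with `B` degrees of freedom. -/
noncomputable def chiSqDensity (B : ℕ) (x : ℝ) : ℝ :=
  x ^ ((B : ℝ) / 2 - 1) * Real.exp (-x / 2) /
    ((2 : ℝ) ^ ((B : ℝ) / 2) * Real.Gamma ((B : ℝ) / 2))

/-- The undersampling ratio `δ` of the group LASSO phase transition, parametrized by
the optimal block soft threshold `τ`. -/
noncomputable def groupLassoDelta (B : ℕ) (τ : ℝ) : ℝ :=
  (-(B + τ ^ 2) * (∫ x in Ioi (τ ^ 2), (τ - Real.sqrt x) * chiSqDensity B x) +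
      τ * ∫ x in Ioi (τ ^ 2), (Real.sqrt x - τ) ^ 2 * chiSqDensity B x) /
    (B * τ - B * ∫ x in Ioi (τ ^ 2), (τ - Real.sqrt x) * chiSqDensity B x)

/-!
Substituting `x = (τ + u/τ)²` in the tail integrals `I_k(τ) = ∫_{τ²}^∞ (√x - τ)^k f(x) dx`
gives `I_k = ε τ^{-(k+1)} J_k` with `ε(τ) = 2 τ^{B-1} e^{-τ²/2} / (2^{B/2} Γ(B/2))` and
`J_k(τ) = ∫_0^∞ u^k (1 + u/τ²)^{B-1} e^{-u - u²/(2τ²)} du`, which tends to `k!` by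
dominated convergence. As `D = ((B + τ²) I₁ + τ I₂) / (Bτ + B I₁)`, the normalized ratio of
the theorem equals `(J₁ (1 + B/τ²) + J₂/τ²) / (1 + ε J₁/τ³)`, and this tends to `1! = 1`
because `ε` decays like a Gaussian.
-/

open scoped Nat Topology

noncomputable def chiSqNormConst (B : ℕ) : ℝ := 2 ^ ((B : ℝ) / 2) * Gamma ((B : ℝ) / 2)

lemma chiSqNormConst_pos {B : ℕ} (hB : 0 < B) : 0 < chiSqNormConst B :=
  mul_pos (by positivity) (Gamma_pos_of_pos (by positivity))

lemma integrableOn_pow_mul_exp_neg (n : ℕ) :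
    IntegrableOn (fun u : ℝ => u ^ n * exp (-u)) (Ioi 0) := by
  simpa [rpow_natCast] using
    integrableOn_rpow_mul_exp_neg_rpow (p := 1) (s := n) (by linarith [n.cast_nonneg (α := ℝ)])
      one_pos

lemma integral_pow_mul_exp_neg (n : ℕ) : ∫ u in Ioi (0 : ℝ), u ^ n * exp (-u) = n ! := by
  rw [← Gamma_nat_eq_factorial, Gamma_eq_integral (by positivity)]
  refine setIntegral_congr_fun measurableSet_Ioi fun u _ => ?_
  simp [mul_comm]

lemma integrableOn_pow_mul_one_add_pow_mul_exp_neg (k m : ℕ) :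
    IntegrableOn (fun u : ℝ => u ^ k * (1 + u) ^ m * exp (-u)) (Ioi 0) := by
  have hexpand : (fun u : ℝ => u ^ k * (1 + u) ^ m * exp (-u)) =
      fun u => ∑ j ∈ Finset.range (m + 1), (m.choose j : ℝ) * (u ^ (k + j) * exp (-u)) := by
    funext u
    rw [add_comm 1 u, add_pow, Finset.mul_sum, Finset.sum_mul]
    refine Finset.sum_congr rfl fun j _ => ?_
    ring
  rw [hexpand]
  exact integrable_finsetSum _ fun j _ => (integrableOn_pow_mul_exp_neg (k + j)).const_mul _

lemma tendsto_pow_mul_exp_neg_sq_div_two (n : ℕ) :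
    Tendsto (fun τ : ℝ => τ ^ n * exp (-τ ^ 2 / 2)) atTop (𝓝 0) := by
  have hexp : Tendsto (fun x : ℝ => exp (-(1 / 2) * x)) atTop (𝓝 0) :=
    tendsto_exp_atBot.comp (tendsto_id.const_mul_atTop_of_neg (by norm_num))
  have := (rpow_mul_exp_neg_mul_sq_isLittleO_exp_neg (b := 1 / 2) (by norm_num) n).trans_tendsto
    hexp
  refine this.congr' ?_
  filter_upwards with τ
  rw [rpow_natCast]
  ring_nf

lemma setIntegral_Ioi_sq_eq {τ : ℝ} (hτ : 0 < τ) (g : ℝ → ℝ) :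
    ∫ x in Ioi (τ ^ 2), g x = ∫ u in Ioi 0, 2 * (τ + u / τ) / τ * g ((τ + u / τ) ^ 2) := by
  set θ : ℝ → ℝ := fun u => (τ + u / τ) ^ 2
  have hderiv : ∀ u ∈ Ioi (0 : ℝ), HasDerivWithinAt θ (2 * (τ + u / τ) / τ) (Ioi 0) u := by
    intro u _
    refine ((((hasDerivAt_id u).div_const τ).const_add τ).fun_pow 2).hasDerivWithinAt.congr_deriv
      ?_
    simp only [id, Nat.cast_ofNat]
    ring
  have hmono : StrictMonoOn θ (Ioi 0) := by
    intro a (ha : 0 < a) b _ hab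
    exact pow_lt_pow_left₀ (by gcongr) (by positivity) two_ne_zero
  have himage : θ '' Ioi 0 = Ioi (τ ^ 2) := by
    ext y
    simp only [θ, mem_image, mem_Ioi]
    constructor
    · rintro ⟨u, hu, rfl⟩
      have : 0 < u / τ := div_pos hu hτ
      nlinarith
    · intro hy
      have hsqrt : τ < √y := lt_sqrt_of_sq_lt hy
      refine ⟨τ * (√y - τ), mul_pos hτ (by linarith), ?_⟩
      rw [mul_div_cancel_left₀ _ hτ.ne', add_sub_cancel, sq_sqrt (by nlinarith)]
  rw [← himage, integral_image_eq_integral_abs_deriv_smul measurableSet_Ioi hderiv hmono.injOn]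
  refine setIntegral_congr_fun measurableSet_Ioi fun u hu => ?_
  have : (0 : ℝ) < u := hu
  rw [smul_eq_mul, abs_of_pos (by positivity)]

lemma chiSqDensity_succ_sq (m : ℕ) {y : ℝ} (hy : 0 < y) :
    chiSqDensity (m + 1) (y ^ 2) = y ^ m * exp (-y ^ 2 / 2) / (y * chiSqNormConst (m + 1)) := by
  have hpow : (y ^ 2) ^ (((m + 1 : ℕ) : ℝ) / 2 - 1) = y ^ m / y := by
    rw [← rpow_natCast y 2, ← rpow_mul hy.le,
      show ((2 : ℕ) : ℝ) * (((m + 1 : ℕ) : ℝ) / 2 - 1) = m - 1 by push_cast; ring,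
      rpow_sub hy, rpow_natCast, rpow_one]
  rw [chiSqDensity, hpow, chiSqNormConst]
  field_simp

/-- `ε(τ)` of the header, for `B = m + 1`. -/
noncomputable def tailScale (m : ℕ) (τ : ℝ) : ℝ :=
  2 * τ ^ m * exp (-τ ^ 2 / 2) / chiSqNormConst (m + 1)

lemma tendsto_tailScale (m : ℕ) : Tendsto (tailScale m) atTop (𝓝 0) := by
  unfold tailScale
  simpa [mul_assoc] using
    ((tendsto_pow_mul_exp_neg_sq_div_two m).const_mul 2).div_const (chiSqNormConst (m + 1))

/-- `J_k(τ)` of the header, for `B = m + 1`. -/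
noncomputable def tailMoment (m k : ℕ) (τ : ℝ) : ℝ :=
  ∫ u in Ioi 0, u ^ k * (1 + u / τ ^ 2) ^ m * exp (-u - u ^ 2 / (2 * τ ^ 2))

lemma tendsto_tailMoment (m k : ℕ) : Tendsto (tailMoment m k) atTop (𝓝 k !) := by
  rw [← integral_pow_mul_exp_neg]
  refine tendsto_integral_filter_of_dominated_convergence
    (fun u => u ^ k * (1 + u) ^ m * exp (-u)) ?_ ?_
    (integrableOn_pow_mul_one_add_pow_mul_exp_neg k m) ?_
  · exact .of_forall fun τ => (by fun_prop : Continuous _).aestronglyMeasurable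
  · filter_upwards [eventually_ge_atTop 1] with τ hτ
    rw [ae_restrict_iff' measurableSet_Ioi]
    refine .of_forall fun u (hu : 0 < u) => ?_
    rw [norm_of_nonneg (by positivity)]
    have hbase : 1 + u / τ ^ 2 ≤ 1 + u := by
      gcongr
      exact div_le_self hu.le (one_le_pow₀ hτ)
    have hexp : exp (-u - u ^ 2 / (2 * τ ^ 2)) ≤ exp (-u) :=
      exp_le_exp.2 (by linarith [show 0 ≤ u ^ 2 / (2 * τ ^ 2) by positivity])
    gcongr
  · refine .of_forall fun u => ?_
    have hsq : Tendsto (fun τ : ℝ => τ ^ 2) atTop atTop := tendsto_pow_atTop two_ne_zero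
    have h1 : Tendsto (fun τ : ℝ => u / τ ^ 2) atTop (𝓝 0) := tendsto_const_nhds.div_atTop hsq
    have h2 : Tendsto (fun τ : ℝ => u ^ 2 / (2 * τ ^ 2)) atTop (𝓝 0) :=
      tendsto_const_nhds.div_atTop (hsq.const_mul_atTop two_pos)
    simpa using ((tendsto_const_nhds (x := u ^ k)).mul
      (((tendsto_const_nhds (x := (1 : ℝ))).add h1).pow m)).mul
      ((continuous_exp.tendsto _).comp ((tendsto_const_nhds (x := -u)).sub h2))

lemma setIntegral_sqrt_sub_pow_mul_chiSqDensity (m k : ℕ) {τ : ℝ} (hτ : 0 < τ) :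
    ∫ x in Ioi (τ ^ 2), (√x - τ) ^ k * chiSqDensity (m + 1) x =
      tailScale m τ / τ ^ (k + 1) * tailMoment m k τ := by
  have hC := chiSqNormConst_pos m.succ_pos
  rw [setIntegral_Ioi_sq_eq hτ, tailMoment, tailScale, ← integral_const_mul]
  refine setIntegral_congr_fun measurableSet_Ioi fun u (hu : 0 < u) => ?_
  have hy : 0 < τ + u / τ := by positivity
  have hexp : exp (-(τ + u / τ) ^ 2 / 2) = exp (-τ ^ 2 / 2) * exp (-u - u ^ 2 / (2 * τ ^ 2)) := by
    rw [← exp_add]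
    congr 1
    field_simp
    ring
  have hpow : (τ + u / τ) ^ m = τ ^ m * (1 + u / τ ^ 2) ^ m := by
    rw [← mul_pow]
    congr 1
    field_simp
  rw [chiSqDensity_succ_sq m hy, sqrt_sq hy.le, hexp, hpow, add_sub_cancel_left, div_pow]
  field_simp
  ring

lemma groupLassoDelta_succ_mul_eq (m : ℕ) {τ : ℝ} (hτ : 0 < τ) :
    groupLassoDelta (m + 1) τ *
        (2 ^ (((m + 1 : ℕ) : ℝ) / 2 - 1) * (m + 1 : ℕ) * Gamma (((m + 1 : ℕ) : ℝ) / 2)) *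
        exp (τ ^ 2 / 2) * τ ^ ((2 : ℝ) - (m + 1 : ℕ)) =
      (tailMoment m 1 τ * (1 + (m + 1 : ℕ) / τ ^ 2) + tailMoment m 2 τ / τ ^ 2) /
        (1 + tailScale m τ / τ ^ 3 * tailMoment m 1 τ) := by
  have hneg : ∫ x in Ioi (τ ^ 2), (τ - √x) * chiSqDensity (m + 1) x =
      -∫ x in Ioi (τ ^ 2), (√x - τ) ^ 1 * chiSqDensity (m + 1) x := by
    rw [← integral_neg]
    exact setIntegral_congr_fun measurableSet_Ioi fun x _ => by ring
  have hrpow : τ ^ ((2 : ℝ) - (m + 1 : ℕ)) = τ ^ 2 / τ ^ (m + 1) := by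
    rw [rpow_sub hτ, rpow_natCast, ← rpow_natCast τ 2, Nat.cast_ofNat]
  have hconst : (2 : ℝ) ^ (((m + 1 : ℕ) : ℝ) / 2 - 1) * (m + 1 : ℕ) * Gamma (((m + 1 : ℕ) : ℝ) / 2)
      = chiSqNormConst (m + 1) * (m + 1 : ℕ) / 2 := by
    rw [rpow_sub two_pos, rpow_one, chiSqNormConst]
    ring
  have hC := chiSqNormConst_pos m.succ_pos
  have hexp : exp (-τ ^ 2 / 2) = (exp (τ ^ 2 / 2))⁻¹ := by
    rw [← exp_neg, neg_div]
  rw [groupLassoDelta, hneg, setIntegral_sqrt_sub_pow_mul_chiSqDensity m 1 hτ,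
    setIntegral_sqrt_sub_pow_mul_chiSqDensity m 2 hτ, hrpow, hconst, tailScale, hexp]
  simp only [mul_neg, sub_neg_eq_add]
  field_simp
  ring

theorem stmt8 (B : ℕ) (hB : 1 ≤ B) :
    Tendsto
      (fun τ : ℝ =>
        groupLassoDelta B τ * ((2 : ℝ) ^ ((B : ℝ) / 2 - 1) * B * Real.Gamma ((B : ℝ) / 2)) *
          Real.exp (τ ^ 2 / 2) * τ ^ ((2 : ℝ) - B))
      atTop (nhds 1) := by
  obtain ⟨m, rfl⟩ := Nat.exists_eq_add_of_le' hB
  have hsq : Tendsto (fun τ : ℝ => τ ^ 2) atTop atTop := tendsto_pow_atTop two_ne_zero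
  have hsmall := (tendsto_tailScale m).div_atTop (tendsto_pow_atTop three_ne_zero)
  have hlim := (((tendsto_tailMoment m 1).mul ((tendsto_const_nhds (x := (1 : ℝ))).add
      ((tendsto_const_nhds (x := ((m + 1 : ℕ) : ℝ))).div_atTop hsq))).add
      ((tendsto_tailMoment m 2).div_atTop hsq)).div
    ((tendsto_const_nhds (x := (1 : ℝ))).add (hsmall.mul (tendsto_tailMoment m 1))) (by norm_num)
  simp only [Nat.factorial_one, Nat.cast_one, add_zero, mul_one, div_one] at hlim
  refine hlim.congr' ?_
  filter_upwards [eventually_gt_atTop 0] with τ hτ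
  exact (groupLassoDelta_succ_mul_eq m hτ).symm
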